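/- arXiv:2412.01768 — 7 statements merged into one kernel-verified Lean document; each statement's English description precedes it below -/
import Mathlib

section
/- Let K ⊆ L be number fields, with rings of integers O_K ⊆ O_L. If ℤ is Diophantine over O_L, then ℤ is Diophantine over O_K. -/
/-!
Write `𝓞 L = ∑ⱼ 𝓞 K ωⱼ`. Substituting `xᵢ = ∑ⱼ yᵢⱼ ωⱼ` into a Diophantine definition of `ℤ` over
`𝓞 L` gives a polynomial `P` over `𝓞 L` whose zeros `(t, y)` with coordinates in `𝓞 K` are exactly
those with `t ∈ ℤ`. The norm `N_{L/K} P` is a polynomial over `K` (the determinant of the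
multiplication-by-`P` matrix) vanishing at the same `K`-points, and clearing its denominators
yields a polynomial over `𝓞 K` that still has the same zeros.
-/

open NumberField

/-- A subset `D` of a commutative ring `R` is Diophantine over `R` if there exist `n ∈ ℕ` and
a polynomial `p ∈ R[y, x₁, …, xₙ]` such that `D = {t : ∃ x, p (t, x) = 0}`. -/
def IsDiophantine {R : Type*} [CommRing R] (D : Set R) : Prop :=
  ∃ (n : ℕ) (p : MvPolynomial (Fin (n + 1)) R),
    ∀ t : R, t ∈ D ↔ ∃ x : Fin n → R, MvPolynomial.eval (Fin.cons t x) p = 0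

open MvPolynomial

namespace MvPolynomial

variable {σ : Type*}

theorem exists_mapMatrix_eval_eq_leftMulMatrix {K L ι : Type*} [Field K] [Field L] [Algebra K L]
    [Fintype ι] [DecidableEq ι] (b : Module.Basis ι K L) (P : MvPolynomial σ L) :
    ∃ M : Matrix ι ι (MvPolynomial σ K), ∀ v : σ → K,
      (eval v).mapMatrix M = Algebra.leftMulMatrix b (eval (algebraMap K L ∘ v) P) := by
  induction P using MvPolynomial.induction_on with
  | C a => exact ⟨C.mapMatrix (Algebra.leftMulMatrix b a), fun v => by ext; simp⟩
  | add p q hp hq =>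
    obtain ⟨Mp, hMp⟩ := hp
    obtain ⟨Mq, hMq⟩ := hq
    exact ⟨Mp + Mq, fun v => by rw [map_add, map_add, map_add, hMp, hMq]⟩
  | mul_X p k hp =>
    obtain ⟨M, hM⟩ := hp
    refine ⟨M * Matrix.scalar ι (X k), fun v => ?_⟩
    rw [map_mul, hM, map_mul, map_mul, eval_X, Function.comp_apply, AlgHom.commutes]
    simp [Matrix.algebraMap_eq_diagonal, Pi.algebraMap_def]

theorem exists_eval_eq_norm {K L : Type*} [Field K] [Field L] [Algebra K L] [FiniteDimensional K L]
    (P : MvPolynomial σ L) :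
    ∃ Q : MvPolynomial σ K, ∀ v : σ → K,
      eval v Q = Algebra.norm K (eval (algebraMap K L ∘ v) P) := by
  obtain ⟨M, hM⟩ := exists_mapMatrix_eval_eq_leftMulMatrix (Module.finBasis K L) P
  exact ⟨M.det, fun v => by
    rw [RingHom.map_det, hM, Algebra.norm_eq_matrix_det (Module.finBasis K L)]⟩

theorem exists_map_eq_C_mul {R S : Type*} [CommRing R] [CommRing S] [Algebra R S]
    (M : Submonoid R) [IsLocalization M S] (Q : MvPolynomial σ S) :
    ∃ (s : M) (Q' : MvPolynomial σ R), map (algebraMap R S) Q' = C (algebraMap R S s) * Q := by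
  obtain ⟨s, hs⟩ := IsLocalization.exist_integer_multiples M Q.support (coeff · Q)
  choose q hq using hs
  refine ⟨s, ∑ m ∈ Q.support.attach, monomial m.1 (q m.1 m.2), ?_⟩
  conv_rhs => rw [Q.as_sum, Finset.mul_sum, ← Finset.sum_attach]
  simp only [map_sum, map_monomial, hq, C_mul_monomial, Algebra.smul_def]

theorem exists_eval_eq_zero_iff_of_isLocalization {R S : Type*} [CommRing R] [CommRing S]
    [IsDomain S] [Algebra R S] (M : Submonoid R) [IsLocalization M S] (hM : M ≤ nonZeroDivisors R)
    (Q : MvPolynomial σ S) :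
    ∃ Q' : MvPolynomial σ R, ∀ v : σ → R,
      eval v Q' = 0 ↔ eval (algebraMap R S ∘ v) Q = 0 := by
  obtain ⟨s, Q', hQ'⟩ := exists_map_eq_C_mul M Q
  have hs : algebraMap R S s ≠ 0 := (IsLocalization.map_units S s).ne_zero
  refine ⟨Q', fun v => ?_⟩
  rw [← (IsLocalization.injective S hM).eq_iff, map_zero, eval₂_comp, ← eval_map, hQ',
    eval_mul, eval_C, mul_eq_zero, or_iff_right hs]

theorem exists_eval_eq_zero_iff_of_finiteDimensional {K L : Type*} [Field K] [Field L]
    [Algebra K L] [FiniteDimensional K L] (P : MvPolynomial σ L) :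
    ∃ Q : MvPolynomial σ K, ∀ v : σ → K, eval v Q = 0 ↔ eval (algebraMap K L ∘ v) P = 0 := by
  obtain ⟨Q, hQ⟩ := exists_eval_eq_norm (K := K) P
  exact ⟨Q, fun v => by rw [hQ, Algebra.norm_eq_zero_iff]⟩

theorem exists_eval_eq_zero_iff_of_isFractionRing {A B K L : Type*} [CommRing A] [CommRing B]
    [Field K] [Field L] [Algebra A B] [Algebra A K] [Algebra A L] [Algebra B L] [Algebra K L]
    [IsFractionRing A K] [FiniteDimensional K L] [IsScalarTower A K L] [IsScalarTower A B L]
    [FaithfulSMul B L] (P : MvPolynomial σ B) :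
    ∃ Q : MvPolynomial σ A, ∀ v : σ → A, eval v Q = 0 ↔ eval (algebraMap A B ∘ v) P = 0 := by
  obtain ⟨QK, hQK⟩ :=
    exists_eval_eq_zero_iff_of_finiteDimensional (K := K) (map (algebraMap B L) P)
  obtain ⟨Q, hQ⟩ := exists_eval_eq_zero_iff_of_isLocalization (nonZeroDivisors A) le_rfl QK
  refine ⟨Q, fun v => ?_⟩
  have tower : algebraMap K L ∘ algebraMap A K = algebraMap B L ∘ algebraMap A B := by
    rw [← RingHom.coe_comp, ← RingHom.coe_comp, ← IsScalarTower.algebraMap_eq,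
      ← IsScalarTower.algebraMap_eq]
  rw [hQ, hQK, ← Function.comp_assoc, tower, Function.comp_assoc, eval_map, ← eval₂_comp,
    map_eq_zero_iff _ (FaithfulSMul.algebraMap_injective B L)]

end MvPolynomial

theorem Function.Injective.preimage_range_intCast {R S : Type*} [Ring R] [Ring S] {f : R →+* S}
    (hf : Function.Injective f) : f ⁻¹' Set.range Int.cast = Set.range Int.cast := by
  ext t
  refine ⟨fun ⟨k, hk⟩ => ⟨k, hf ?_⟩, fun ⟨k, hk⟩ => ⟨k, ?_⟩⟩
  · rw [map_intCast, hk]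
  · rw [← hk, map_intCast]

namespace IsDiophantine

variable {A B : Type*} [CommRing A] [CommRing B] [Algebra A B]

theorem exists_preimage_algebraMap [Module.Finite A B] {D : Set B} (hD : IsDiophantine D) :
    ∃ (m : ℕ) (P : MvPolynomial (Fin (m + 1)) B), ∀ t : A,
      algebraMap A B t ∈ D ↔ ∃ y : Fin m → A, eval (algebraMap A B ∘ Fin.cons t y) P = 0 := by
  obtain ⟨n, p, hp⟩ := hD
  obtain ⟨d, ω, hω⟩ := Module.Finite.exists_fin (R := A) (M := B)
  let e : Fin n × Fin d ≃ Fin (n * d) := finProdFinEquiv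
  let u : Fin (n + 1) → MvPolynomial (Fin (n * d + 1)) B :=
    Fin.cons (X 0) fun i => ∑ j, C (ω j) * X (e (i, j)).succ
  have eval_u (t : A) (y : Fin (n * d) → A) :
      (fun i => eval (algebraMap A B ∘ Fin.cons t y) (u i)) =
        Fin.cons (algebraMap A B t) fun i => ∑ j, y (e (i, j)) • ω j := by
    ext i
    refine Fin.cases ?_ (fun i => ?_) i
    · simp [u]
    · simp [u, Algebra.smul_def, mul_comm]
  refine ⟨n * d, bind₁ u p, fun t => ?_⟩
  have eval_bind (y : Fin (n * d) → A) : eval (algebraMap A B ∘ Fin.cons t y) (bind₁ u p) =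
      eval (Fin.cons (algebraMap A B t) fun i => ∑ j, y (e (i, j)) • ω j) p := by
    rw [← eval_u]; exact eval₂Hom_bind₁ _ _ _ _
  simp only [eval_bind, hp]
  constructor
  · rintro ⟨x, hx⟩
    have hx_span (i : Fin n) : ∃ c : Fin d → A, ∑ j, c j • ω j = x i :=
      Submodule.mem_span_range_iff_exists_fun A |>.mp (hω ▸ Submodule.mem_top)
    choose c hc using hx_span
    refine ⟨fun k => c (e.symm k).1 (e.symm k).2, ?_⟩
    simpa only [Equiv.symm_apply_apply, hc] using hx
  · rintro ⟨y, hy⟩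
    exact ⟨_, hy⟩

end IsDiophantine

/-- Let `K ⊆ L` be number fields.  If `ℤ` is Diophantine over `O_L`, then `ℤ` is Diophantine
over `O_K`. -/
theorem int_isDiophantine_of_int_isDiophantine (K L : Type*) [Field K] [NumberField K]
    [Field L] [NumberField L] [Algebra K L]
    (h : IsDiophantine (Set.range (Int.cast : ℤ → 𝓞 L))) :
    IsDiophantine (Set.range (Int.cast : ℤ → 𝓞 K)) := by
  obtain ⟨m, P, hP⟩ := h.exists_preimage_algebraMap (A := 𝓞 K)
  obtain ⟨Q, hQ⟩ := exists_eval_eq_zero_iff_of_isFractionRing (A := 𝓞 K) (K := K) (L := L) P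
  refine ⟨m, Q, fun t => ?_⟩
  rw [← (FaithfulSMul.algebraMap_injective (𝓞 K) (𝓞 L)).preimage_range_intCast,
    Set.mem_preimage, hP]
  simp only [hQ]
end

section
/- Let L be a number field that is Galois over ℚ, let K be a subfield of L with [L : K] = 2, and let σ₁ : L → ℂ be an embedding such that σ₁(K) ⊆ ℝ but σ₁(L) ⊄ ℝ. Then for every τ ∈ Gal(L/ℚ), one has σ₁(τ(K)) ⊆ ℝ if and only if τ lies in the centralizer of Gal(L/K) inside Gal(L/ℚ); that is, {τ ∈ Gal(L/ℚ) : σ₁(τ(K)) ⊆ ℝ} = C_{Gal(L/ℚ)}(Gal(L/K)). -/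
/-!
Let `c ∈ Gal(L/ℚ)` be complex conjugation transported to `L` by `σ₁`, i.e. `σ₁ ∘ c = conj ∘ σ₁`;
it exists because `L/ℚ` is normal. An element of `L` is fixed by `c` exactly when its image
under `σ₁` is real, so `c ∈ Gal(L/K)`, and `c ≠ 1` since `σ₁(L) ⊄ ℝ`; as `Gal(L/K)` has order
two, it is `{1, c}`. Now `σ₁(τ(K)) ⊆ ℝ` says that `c` fixes `τ(K)`, i.e. `τ⁻¹ c τ ∈ Gal(L/K)`.
Being nontrivial, `τ⁻¹ c τ` must then equal `c`, which is to say that `τ` commutes with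
`Gal(L/K) = {1, c}`.
-/

open NumberField ComplexEmbedding

namespace Subgroup

variable {G : Type*} [Group G] {H : Subgroup G} {c : G}

theorem eq_of_ne_one_of_card_eq_two (hH : Nat.card H = 2) (hc : c ∈ H) (hc1 : c ≠ 1)
    {g : G} (hg : g ∈ H) (hg1 : g ≠ 1) : g = c := by
  obtain ⟨y, -, hy⟩ := (Nat.card_eq_two_iff' (1 : H)).mp hH
  have hgy : (⟨g, hg⟩ : H) = y := hy _ (by simpa [Subtype.ext_iff] using hg1)
  have hcy : (⟨c, hc⟩ : H) = y := hy _ (by simpa [Subtype.ext_iff] using hc1)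
  exact congrArg Subtype.val (hgy.trans hcy.symm)

theorem mem_centralizer_iff_conj_mem_of_card_eq_two (hH : Nat.card H = 2) (hc : c ∈ H)
    (hc1 : c ≠ 1) (τ : G) : τ ∈ centralizer (H : Set G) ↔ τ⁻¹ * c * τ ∈ H := by
  constructor
  · intro hτ
    have hcτ : c * τ = τ * c := mem_centralizer_iff.mp hτ c hc
    rwa [mul_assoc, hcτ, inv_mul_cancel_left]
  · intro hconj
    have hconj1 : τ⁻¹ * c * τ ≠ 1 := fun h =>
      hc1 (by simpa [mul_assoc] using congrArg (fun g => τ * g * τ⁻¹) h)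
    have hcτ : c * τ = τ * c :=
      calc c * τ = τ * (τ⁻¹ * c * τ) := by group
        _ = τ * c := by rw [eq_of_ne_one_of_card_eq_two hH hc hc1 hconj hconj1]
    refine mem_centralizer_iff.mpr fun g hg => ?_
    by_cases hg1 : g = 1
    · simp [hg1]
    · rwa [eq_of_ne_one_of_card_eq_two hH hc hc1 hg hg1]

end Subgroup

namespace NumberField.ComplexEmbedding

variable {k K : Type*} [Field k] [Field K] [Algebra k K] {φ : K →+* ℂ}

theorem exists_isConj [IsGalois k K] (hφ : IsReal (φ.comp (algebraMap k K))) :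
    ∃ σ : Gal(K/k), IsConj φ σ := by
  obtain ⟨σ, hσ⟩ := exists_comp_symm_eq_of_comp_eq (k := k) φ (conjugate φ) <| by
    ext x
    simpa using congrArg (· x) (isReal_iff.mp hφ).symm
  exact ⟨σ.symm, hσ.symm⟩

theorem IsConj.apply_eq_self_iff {σ : Gal(K/k)} (hσ : IsConj φ σ) (x : K) :
    σ x = x ↔ (φ x).im = 0 := by
  rw [← φ.injective.eq_iff, hσ.eq, Complex.star_def, Complex.conj_eq_iff_im]

theorem IsConj.mem_fixingSubgroup_iff {σ : Gal(K/k)} (hσ : IsConj φ σ)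
    (E : IntermediateField k K) : σ ∈ E.fixingSubgroup ↔ ∀ x ∈ E, (φ x).im = 0 := by
  simp only [IntermediateField.mem_fixingSubgroup_iff, hσ.apply_eq_self_iff]

end NumberField.ComplexEmbedding

/-- Let `L` be a number field Galois over `ℚ`, let `K` be a subfield of `L` with `[L : K] = 2`,
and let `σ₁ : L → ℂ` be an embedding with `σ₁(K) ⊆ ℝ` but `σ₁(L) ⊄ ℝ`.  Then for every
`τ ∈ Gal(L/ℚ)`, one has `σ₁(τ(K)) ⊆ ℝ` if and only if `τ` centralizes `Gal(L/K)`. -/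
theorem real_image_iff_mem_centralizer (L : Type*) [Field L] [NumberField L] [IsGalois ℚ L]
    (K : IntermediateField ℚ L) (hdeg : Module.finrank K L = 2)
    (σ₁ : L →+* ℂ) (hK : ∀ x ∈ K, (σ₁ x).im = 0) (hL : ¬∀ x : L, (σ₁ x).im = 0) :
    ∀ τ : L ≃ₐ[ℚ] L, (∀ x ∈ K, (σ₁ (τ x)).im = 0) ↔
      τ ∈ Subgroup.centralizer (K.fixingSubgroup : Set (L ≃ₐ[ℚ] L)) := by
  intro τ
  obtain ⟨c, hc⟩ := exists_isConj (k := ℚ) (φ := σ₁) <| isReal_iff.mpr (Subsingleton.elim _ _)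
  have hcK : c ∈ K.fixingSubgroup := (hc.mem_fixingSubgroup_iff K).mpr hK
  have hc1 : c ≠ 1 := fun h => hL fun x => (hc.apply_eq_self_iff x).mp (by simp [h])
  have hcard : Nat.card K.fixingSubgroup = 2 := by
    rw [IsGalois.card_fixingSubgroup_eq_finrank, hdeg]
  rw [Subgroup.mem_centralizer_iff_conj_mem_of_card_eq_two hcard hcK hc1,
    (hc.comp τ).mem_fixingSubgroup_iff K]
  rfl
end

section
/- Let L be a number field that is Galois over ℚ, let K be a subfield of L with [L : K] = 2, and suppose there exists an embedding σ₁ : L → ℂ with σ₁(K) ⊆ ℝ but σ₁(L) ⊄ ℝ. Then the number of real embeddings of K (ring homomorphisms K → ℂ with image contained in ℝ) equals |C_{Gal(L/ℚ)}(Gal(L/K))| / 2, where C_{Gal(L/ℚ)}(Gal(L/K)) is the centralizer of Gal(L/K) in Gal(L/ℚ). -/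
/-!
Let `τ ∈ Gal(L/ℚ)` be complex conjugation transported along `σ₁`; the hypotheses say that `τ`
is the nontrivial element of `H = Gal(L/K)`. Every embedding of `K` is the restriction of
`σ₁ ∘ g` for some `g ∈ Gal(L/ℚ)`, two of these agree iff the `g`'s lie in the same left coset
of `H`, and `σ₁ ∘ g` is real on `K` iff `g⁻¹ τ g ∈ H`, i.e. iff `g` commutes with `τ`. So the
real embeddings of `K` are in bijection with `C ⧸ H`, where `C` is the centralizer of `H`.
-/

open NumberField ComplexEmbedding

namespace Subgroup

variable {G : Type*} [Group G]

theorem conj_mem_iff_mem_centralizer_of_card_eq_two {H : Subgroup G} (hH : Nat.card H = 2)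
    {τ : G} (hτ : τ ∈ H) (hτ1 : τ ≠ 1) (g : G) :
    g⁻¹ * τ * g ∈ H ↔ g ∈ centralizer H := by
  have eq_of_ne_one : ∀ h ∈ H, h ≠ 1 → h = τ := fun h hh h1 =>
    congrArg Subtype.val <| ((Nat.card_eq_two_iff' (1 : H)).mp hH).unique
      (y₁ := ⟨h, hh⟩) (y₂ := ⟨τ, hτ⟩) (by simpa using h1) (by simpa using hτ1)
  have mem_centralizer_iff_commute : g ∈ centralizer H ↔ τ * g = g * τ := by
    refine ⟨fun hg => hg τ hτ, fun hc h hh => ?_⟩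
    by_cases h1 : h = 1
    · simp [h1]
    · rw [eq_of_ne_one h hh h1, hc]
  rw [mem_centralizer_iff_commute]
  constructor
  · intro hconj
    have hne : g⁻¹ * τ * g ≠ 1 := fun h => hτ1 <| calc
      τ = g * (g⁻¹ * τ * g) * g⁻¹ := by group
      _ = 1 := by rw [h]; group
    calc τ * g = g * (g⁻¹ * τ * g) := by group
      _ = g * τ := by rw [eq_of_ne_one _ hconj hne]
  · intro hc
    rwa [mul_assoc, hc, ← mul_assoc, inv_mul_cancel, one_mul]

theorem card_eq_card_mul_card_of_fibers_eq_leftCosets {X : Type*} (H : Subgroup G) {f : G → X}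
    (hf : Function.Surjective f) (hfib : ∀ a b, f a = f b ↔ a⁻¹ * b ∈ H) :
    Nat.card G = Nat.card X * Nat.card H := by
  have e : G ⧸ H ≃ X :=
    (Quotient.congrRight fun a b => QuotientGroup.leftRel_apply.trans (hfib a b).symm).trans
      (Setoid.quotientKerEquivOfSurjective f hf)
  rw [H.card_eq_card_quotient_mul_card_subgroup, Nat.card_congr e]

end Subgroup

theorem comp_comp_algebraMap_eq_iff_inv_mul_mem_fixingSubgroup {k L E : Type*} [Field k]
    [Field L] [Algebra k L] [Field E] (K : IntermediateField k L) (φ : L →+* E)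
    (g g' : Gal(L/k)) :
    (φ.comp (g : L →+* L)).comp (algebraMap K L) =
        (φ.comp (g' : L →+* L)).comp (algebraMap K L) ↔ g⁻¹ * g' ∈ K.fixingSubgroup := by
  simp only [RingHom.ext_iff, RingHom.comp_apply, φ.injective.eq_iff, Subtype.forall,
    IntermediateField.mem_fixingSubgroup_iff, AlgEquiv.mul_apply,
    IntermediateField.algebraMap_apply, AlgEquiv.aut_inv, AlgEquiv.symm_apply_eq]
  exact forall₂_congr fun _ _ => eq_comm

namespace NumberField.ComplexEmbedding

theorem isReal_iff_forall_im_eq_zero {K : Type*} [Field K] (φ : K →+* ℂ) :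
    IsReal φ ↔ ∀ x, (φ x).im = 0 :=
  isReal_iff.trans (RingHom.ext_iff.trans (forall_congr' fun _ => Complex.conj_eq_iff_im))

variable {k L : Type*} [Field k] [Field L] [Algebra k L]

theorem isReal_comp_algebraMap_iff_mem_fixingSubgroup (K : IntermediateField k L)
    {φ : L →+* ℂ} {τ : Gal(L/k)} (hτ : IsConj φ τ) :
    IsReal (φ.comp (algebraMap K L)) ↔ τ ∈ K.fixingSubgroup := by
  have conjugate_eq :
      conjugate (φ.comp (algebraMap K L)) = (φ.comp (τ : L →+* L)).comp (algebraMap K L) := by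
    rw [← hτ]; rfl
  have comp_one : φ.comp ((1 : Gal(L/k)) : L →+* L) = φ := rfl
  rw [isReal_iff, conjugate_eq, ← inv_mem_iff, ← mul_one τ⁻¹,
    ← comp_comp_algebraMap_eq_iff_inv_mul_mem_fixingSubgroup K φ, comp_one]

variable [IsGalois k L]

theorem exists_isConj_of_isReal_comp_algebraMap {φ : L →+* ℂ}
    (h : IsReal (φ.comp (algebraMap k L))) : ∃ τ : Gal(L/k), IsConj φ τ := by
  obtain ⟨σ, hσ⟩ := exists_comp_symm_eq_of_comp_eq φ (conjugate φ) (isReal_iff.mp h).symm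
  exact ⟨σ.symm, hσ.symm⟩

theorem exists_comp_comp_algebraMap_eq (K : IntermediateField k L) (φ : L →+* ℂ)
    (ψ : K →+* ℂ) (h : φ.comp (algebraMap k L) = ψ.comp (algebraMap k K)) :
    ∃ g : Gal(L/k), (φ.comp (g : L →+* L)).comp (algebraMap K L) = ψ := by
  have : Algebra.IsAlgebraic K L := Algebra.IsAlgebraic.tower_top (K := k) K
  obtain ⟨g, hg⟩ := exists_comp_symm_eq_of_comp_eq φ (lift L ψ) <| by
    rw [h, IsScalarTower.algebraMap_eq k K L, ← RingHom.comp_assoc, lift_comp_algebraMap]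
  exact ⟨g.symm, by rw [hg, lift_comp_algebraMap]⟩

end NumberField.ComplexEmbedding

/-- Let `L` be a number field Galois over `ℚ`, let `K` be a subfield of `L` with `[L : K] = 2`,
and suppose there is an embedding `σ₁ : L → ℂ` with `σ₁(K) ⊆ ℝ` but `σ₁(L) ⊄ ℝ`.  Then the
number of real embeddings of `K` equals half the order of the centralizer of `Gal(L/K)` in
`Gal(L/ℚ)`. -/
theorem card_real_embeddings_eq_card_centralizer_div_two (L : Type*) [Field L] [NumberField L]
    [IsGalois ℚ L] (K : IntermediateField ℚ L) (hdeg : Module.finrank K L = 2)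
    (σ₁ : L →+* ℂ) (hK : ∀ x ∈ K, (σ₁ x).im = 0) (hL : ¬∀ x : L, (σ₁ x).im = 0) :
    Nat.card {σ : K →+* ℂ // ∀ x, (σ x).im = 0} =
      Nat.card (Subgroup.centralizer (K.fixingSubgroup : Set (L ≃ₐ[ℚ] L))) / 2 := by
  set H := K.fixingSubgroup
  set C := Subgroup.centralizer (H : Set Gal(L/ℚ))
  have hH : Nat.card H = 2 := (IsGalois.card_fixingSubgroup_eq_finrank K).trans hdeg
  obtain ⟨τ, hτ⟩ := exists_isConj_of_isReal_comp_algebraMap (k := ℚ) (φ := σ₁)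
    (Subsingleton.elim _ _)
  have hτH : τ ∈ H := (isReal_comp_algebraMap_iff_mem_fixingSubgroup K hτ).mp
    ((isReal_iff_forall_im_eq_zero _).mpr fun x => hK x x.2)
  have hτ1 : τ ≠ 1 :=
    (isConj_ne_one_iff hτ).mpr (mt (isReal_iff_forall_im_eq_zero σ₁).mp hL)
  have conj_mem_iff := Subgroup.conj_mem_iff_mem_centralizer_of_card_eq_two hH hτH hτ1
  have isReal_iff_mem (g : Gal(L/ℚ)) :
      IsReal ((σ₁.comp (g : L →+* L)).comp (algebraMap K L)) ↔ g ∈ C :=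
    (isReal_comp_algebraMap_iff_mem_fixingSubgroup K (hτ.comp g)).trans (conj_mem_iff g)
  let f (g : C) : {σ : K →+* ℂ // ∀ x, (σ x).im = 0} :=
    ⟨_, (isReal_iff_forall_im_eq_zero _).mp ((isReal_iff_mem g).mpr g.2)⟩
  have hf : Function.Surjective f := by
    rintro ⟨ψ, hψ⟩
    obtain ⟨g, hg⟩ := exists_comp_comp_algebraMap_eq K σ₁ ψ (Subsingleton.elim _ _)
    exact ⟨⟨g, (isReal_iff_mem g).mp (hg ▸ (isReal_iff_forall_im_eq_zero ψ).mpr hψ)⟩,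
      Subtype.ext hg⟩
  have hHC : H ≤ C := fun h hh =>
    (conj_mem_iff h).mp (H.mul_mem (H.mul_mem (H.inv_mem hh) hτH) hh)
  have hcount := Subgroup.card_eq_card_mul_card_of_fibers_eq_leftCosets (H.subgroupOf C) hf
    fun a b => Subtype.ext_iff.trans
      (comp_comp_algebraMap_eq_iff_inv_mul_mem_fixingSubgroup K σ₁ a b)
  rw [Nat.card_congr (Subgroup.subgroupOfEquivOfLe hHC).toEquiv, hH] at hcount
  omega
end

section
/- Let K be a number field, and let a₂, a₄, a₆ ∈ K be such that y² = x³ + a₂x² + a₄x + a₆ has nonzero discriminant, defining an elliptic curve E over K. Let d ∈ K^× be a non-square and let L = K(√d) be the quadratic extension of K obtained by adjoining a square root of d. Then rk E(L) = rk E(K) + rk E^d(K), where E^d is the quadratic twist y² = x³ + d·a₂·x² + d²·a₄·x + d³·a₆. -/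
/-!
Let `σ` be the nontrivial automorphism of `L = K(√d)`; it acts on `E(L)` as an involution. Its
fixed points are `E(K)`, and its anti-fixed points (`σ P = -P`) are the image of `E^d(K)` under
`τ (x, y) = (x / d, y / (d √d))`, the isomorphism `E^d ≅ E` over `L`. So
`(P, Q) ↦ P + τ Q : E(K) × E^d(K) → E(L)` has kernel killed by `2` (apply `σ`) and cokernel
killed by `2` (as `2 R = (R + σ R) + (R - σ R)`), hence preserves ranks.
-/

universe u

/-- The quadratic twist by `d` of the elliptic curve `y² = x³ + a₂x² + a₄x + a₆`, namely the
Weierstrass curve `y² = x³ + d·a₂·x² + d²·a₄·x + d³·a₆`. -/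
def quadraticTwist {K : Type*} [CommRing K] (a₂ a₄ a₆ d : K) : WeierstrassCurve K :=
  ⟨0, d * a₂, 0, d ^ 2 * a₄, d ^ 3 * a₆⟩

theorem AddMonoidHom.rank_eq_of_nsmul_ker_eq_zero_of_nsmul_mem_range {A B : Type u}
    [AddCommGroup A] [AddCommGroup B] (f : A →+ B) {n : ℕ} (hn : n ≠ 0)
    (hker : ∀ a, f a = 0 → n • a = 0) (hrange : ∀ b, ∃ a, f a = n • b) :
    Module.rank ℤ A = Module.rank ℤ B := by
  have hn' : (n : ℤ) ∈ nonZeroDivisors ℤ :=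
    mem_nonZeroDivisors_of_ne_zero (by exact_mod_cast hn)
  let g := f.toIntLinearMap
  have hker' : Module.IsTorsion ℤ (LinearMap.ker g) := fun ⟨a, ha⟩ =>
    ⟨⟨n, hn'⟩, Subtype.ext (by simpa using hker a ha)⟩
  have hcoker : Module.IsTorsion ℤ (B ⧸ LinearMap.range g) := by
    intro b
    induction b using Submodule.Quotient.induction_on with | H b => ?_
    obtain ⟨a, ha⟩ := hrange b
    refine ⟨⟨n, hn'⟩, ?_⟩
    rw [Submonoid.smul_def, ← Submodule.Quotient.mk_smul, Submodule.Quotient.mk_eq_zero]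
    exact ⟨a, by simpa [g] using ha⟩
  rw [← g.rank_range_add_rank_ker, ← (LinearMap.range g).rank_quotient_add_rank,
    hker'.rank_eq_zero, hcoker.rank_eq_zero, add_zero, zero_add]

theorem rank_prod_of_hasRankNullity {R : Type*} [Ring R] [HasRankNullity.{u} R] {M N : Type u}
    [AddCommGroup M] [Module R M] [AddCommGroup N] [Module R N] :
    Module.rank R (M × N) = Module.rank R M + Module.rank R N := by
  rw [LinearMap.rank_eq_of_surjective (LinearMap.fst_surjective (R := R) (M := M) (M₂ := N)),
    LinearMap.ker_fst, ← (LinearEquiv.ofInjective _ LinearMap.inr_injective).rank_eq]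

theorem rank_eq_rank_add_rank_of_involution {A₁ A₂ B : Type u} [AddCommGroup A₁]
    [AddCommGroup A₂] [AddCommGroup B] (σ : B →+ B) (ι : A₁ →+ B) (τ : A₂ →+ B)
    (hσσ : ∀ b, σ (σ b) = b) (hι : Function.Injective ι) (hτ : Function.Injective τ)
    (hσι : ∀ a, σ (ι a) = ι a) (hστ : ∀ a, σ (τ a) = -τ a)
    (hfix : ∀ b, σ b = b → ∃ a, ι a = b) (hanti : ∀ b, σ b = -b → ∃ a, τ a = b) :
    Module.rank ℤ B = Module.rank ℤ A₁ + Module.rank ℤ A₂ := by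
  let f : A₁ × A₂ →+ B := ι.coprod τ
  have hker (p : A₁ × A₂) (hp : f p = 0) : 2 • p = 0 := by
    obtain ⟨a, c⟩ := p
    have hsum : ι a + τ c = 0 := hp
    have hdiff : ι a - τ c = 0 := by
      simpa [hσι, hστ, sub_eq_add_neg] using congrArg σ hsum
    have ha : ι (2 • a) = ι 0 := by
      rw [map_nsmul, map_zero, two_nsmul]
      linear_combination (norm := abel) hsum + hdiff
    have hc : τ (2 • c) = τ 0 := by
      rw [map_nsmul, map_zero, two_nsmul]
      linear_combination (norm := abel) hsum - hdiff
    simp [hι ha, hτ hc]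
  have hrange (b : B) : ∃ p, f p = 2 • b := by
    obtain ⟨a₁, ha₁⟩ := hfix (b + σ b) (by rw [map_add, hσσ, add_comm])
    obtain ⟨a₂, ha₂⟩ := hanti (b - σ b) (by rw [map_sub, hσσ, neg_sub])
    refine ⟨(a₁, a₂), ?_⟩
    simp only [f, AddMonoidHom.coprod_apply, ha₁, ha₂, two_nsmul]
    abel
  rw [← rank_prod_of_hasRankNullity,
    f.rank_eq_of_nsmul_ker_eq_zero_of_nsmul_mem_range two_ne_zero hker hrange]

open Polynomial

section QuadraticConj

variable {K L : Type*} [Field K] [Field L] [Algebra K L] {d : K} {s : L}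

theorem exists_eq_algebraMap_add_algebraMap_mul (hs : s ^ 2 = algebraMap K L d)
    (hgen : Algebra.adjoin K {s} = ⊤) (x : L) :
    ∃ a b : K, x = algebraMap K L a + algebraMap K L b * s := by
  have hx : x ∈ Algebra.adjoin K {s} := hgen ▸ Algebra.mem_top
  induction hx using Algebra.adjoin_induction with
  | mem y hy => exact ⟨0, 1, by simp [Set.mem_singleton_iff.mp hy]⟩
  | algebraMap a => exact ⟨a, 0, by simp⟩
  | add y z _ _ hy hz =>
    obtain ⟨a, b, rfl⟩ := hy
    obtain ⟨a', b', rfl⟩ := hz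
    exact ⟨a + a', b + b', by simp only [map_add]; ring⟩
  | mul y z _ _ hy hz =>
    obtain ⟨a, b, rfl⟩ := hy
    obtain ⟨a', b', rfl⟩ := hz
    refine ⟨a * a' + b * b' * d, a * b' + b * a', ?_⟩
    simp only [map_add, map_mul, ← hs]
    ring

theorem minpoly_eq_X_sq_sub_C (hdns : ¬∃ c : K, c ^ 2 = d) (hs : s ^ 2 = algebraMap K L d) :
    minpoly K s = X ^ 2 - C d :=
  (minpoly.eq_of_irreducible_of_monic
    (X_pow_sub_C_irreducible_of_prime Nat.prime_two fun c hc => hdns ⟨c, hc⟩)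
    (by simp [hs]) (monic_X_pow_sub_C d two_ne_zero)).symm

variable (hdns : ¬∃ c : K, c ^ 2 = d) (hs : s ^ 2 = algebraMap K L d)
  (hgen : Algebra.adjoin K {s} = ⊤)

include hdns hs in
theorem ne_zero_of_sq_eq_nonsquare : s ≠ 0 := by
  rintro rfl
  exact hdns ⟨0, (FaithfulSMul.algebraMap_injective K L) (by simp [← hs])⟩

include hs in
theorem isIntegral_of_sq_eq : IsIntegral K s :=
  ⟨X ^ 2 - C d, monic_X_pow_sub_C d two_ne_zero, by simp [hs]⟩

include hdns hs in
theorem aeval_neg_minpoly : aeval (-s) (minpoly K s) = 0 := by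
  simp [minpoly_eq_X_sq_sub_C hdns hs, hs]

noncomputable def quadraticConj : L →ₐ[K] L :=
  (IsAdjoinRoot.mkOfAdjoinEqTop (isIntegral_of_sq_eq hs) hgen).liftHom (-s)
    (aeval_neg_minpoly hdns hs)

theorem quadraticConj_self : quadraticConj hdns hs hgen s = -s := by
  have h := (IsAdjoinRoot.mkOfAdjoinEqTop (isIntegral_of_sq_eq hs) hgen).liftHom_root
    (aeval_neg_minpoly hdns hs)
  rwa [IsAdjoinRoot.mkOfAdjoinEqTop_root] at h

theorem quadraticConj_apply (a b : K) :
    quadraticConj hdns hs hgen (algebraMap K L a + algebraMap K L b * s) =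
      algebraMap K L a - algebraMap K L b * s := by
  simp [quadraticConj_self, sub_eq_add_neg]

theorem quadraticConj_quadraticConj (x : L) :
    quadraticConj hdns hs hgen (quadraticConj hdns hs hgen x) = x := by
  obtain ⟨a, b, rfl⟩ := exists_eq_algebraMap_add_algebraMap_mul hs hgen x
  rw [quadraticConj_apply, sub_eq_add_neg, ← neg_mul, ← map_neg, quadraticConj_apply]
  simp

variable [NeZero (2 : L)]

theorem exists_algebraMap_eq_of_quadraticConj_eq {x : L}
    (hx : quadraticConj hdns hs hgen x = x) : ∃ a : K, algebraMap K L a = x := by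
  obtain ⟨a, b, rfl⟩ := exists_eq_algebraMap_add_algebraMap_mul hs hgen x
  rw [quadraticConj_apply] at hx
  have : 2 * (algebraMap K L b * s) = 0 := by linear_combination -hx
  simp only [mul_eq_zero, two_ne_zero, ne_zero_of_sq_eq_nonsquare hdns hs, false_or, or_false,
    map_eq_zero] at this
  exact ⟨a, by simp [this]⟩

theorem exists_algebraMap_mul_eq_of_quadraticConj_eq_neg {x : L}
    (hx : quadraticConj hdns hs hgen x = -x) : ∃ b : K, algebraMap K L b * s = x := by
  obtain ⟨a, b, rfl⟩ := exists_eq_algebraMap_add_algebraMap_mul hs hgen x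
  rw [quadraticConj_apply] at hx
  have : 2 * algebraMap K L a = 0 := by linear_combination hx
  simp only [mul_eq_zero, two_ne_zero, false_or, map_eq_zero] at this
  exact ⟨b, by simp [this]⟩

end QuadraticConj

namespace WeierstrassCurve.Affine

variable {F : Type*} [Field F] {W W' : WeierstrassCurve F} {u : Fˣ}
  (h : W' = (⟨u, 0, 0, 0⟩ : VariableChange F) • W)
include h

theorem coeffs_eq_of_eq_scaling :
    W.a₁ = u * W'.a₁ ∧ W.a₂ = u ^ 2 * W'.a₂ ∧ W.a₃ = u ^ 3 * W'.a₃ ∧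
      W.a₄ = u ^ 4 * W'.a₄ ∧ W.a₆ = u ^ 6 * W'.a₆ := by
  subst h
  simp only [variableChange_a₁, variableChange_a₂, variableChange_a₃, variableChange_a₄,
    variableChange_a₆, ← mul_assoc, ← mul_pow, Units.mul_inv, one_pow, one_mul]
  simp

theorem equation_scaling (x y : F) :
    W.toAffine.Equation (u ^ 2 * x) (u ^ 3 * y) ↔ W'.toAffine.Equation x y := by
  obtain ⟨h₁, h₂, h₃, h₄, h₆⟩ := coeffs_eq_of_eq_scaling h
  rw [equation_iff', equation_iff', h₁, h₂, h₃, h₄, h₆]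
  conv_rhs => rw [← mul_eq_zero_iff_left (pow_ne_zero 6 u.ne_zero)]
  ring_nf

theorem nonsingular_scaling (x y : F) :
    W.toAffine.Nonsingular (u ^ 2 * x) (u ^ 3 * y) ↔ W'.toAffine.Nonsingular x y := by
  obtain ⟨h₁, h₂, h₃, h₄, -⟩ := coeffs_eq_of_eq_scaling h
  have hX : W.a₁ * (u ^ 3 * y) - (3 * (u ^ 2 * x) ^ 2 + 2 * W.a₂ * (u ^ 2 * x) + W.a₄) =
      u ^ 4 * (W'.a₁ * y - (3 * x ^ 2 + 2 * W'.a₂ * x + W'.a₄)) := by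
    rw [h₁, h₂, h₄]; ring
  have hY : 2 * (u ^ 3 * y) + W.a₁ * (u ^ 2 * x) + W.a₃ =
      u ^ 3 * (2 * y + W'.a₁ * x + W'.a₃) := by
    rw [h₁, h₃]; ring
  rw [nonsingular_iff', nonsingular_iff', equation_scaling h, hX, hY,
    mul_ne_zero_iff_left (pow_ne_zero 4 u.ne_zero),
    mul_ne_zero_iff_left (pow_ne_zero 3 u.ne_zero)]

theorem negY_scaling (x y : F) :
    W.toAffine.negY (u ^ 2 * x) (u ^ 3 * y) = u ^ 3 * W'.toAffine.negY x y := by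
  obtain ⟨h₁, -, h₃, -, -⟩ := coeffs_eq_of_eq_scaling h
  rw [negY, negY, h₁, h₃]
  ring

theorem slope_scaling [DecidableEq F] (x₁ x₂ y₁ y₂ : F) :
    W.toAffine.slope (u ^ 2 * x₁) (u ^ 2 * x₂) (u ^ 3 * y₁) (u ^ 3 * y₂) =
      u * W'.toAffine.slope x₁ x₂ y₁ y₂ := by
  obtain ⟨h₁, h₂, -, h₄, -⟩ := coeffs_eq_of_eq_scaling h
  have hu := u.ne_zero
  simp only [slope, negY_scaling h, mul_right_inj' (pow_ne_zero _ hu)]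
  split_ifs with hx hy
  · simp
  · rw [← mul_sub, h₁, h₂, h₄]
    rcases eq_or_ne (y₁ - W'.toAffine.negY x₁ y₁) 0 with hD | hD
    · rw [hD, mul_zero, div_zero, div_zero, mul_zero]
    · field_simp
  · rw [← mul_sub, ← mul_sub]
    have : x₁ - x₂ ≠ 0 := sub_ne_zero.mpr hx
    field_simp

theorem addX_scaling (x₁ x₂ ℓ : F) :
    W.toAffine.addX (u ^ 2 * x₁) (u ^ 2 * x₂) (u * ℓ) =
      u ^ 2 * W'.toAffine.addX x₁ x₂ ℓ := by
  obtain ⟨h₁, h₂, -, -, -⟩ := coeffs_eq_of_eq_scaling h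
  rw [addX, addX, h₁, h₂]
  ring

theorem negAddY_scaling (x₁ x₂ y₁ ℓ : F) :
    W.toAffine.negAddY (u ^ 2 * x₁) (u ^ 2 * x₂) (u ^ 3 * y₁) (u * ℓ) =
      u ^ 3 * W'.toAffine.negAddY x₁ x₂ y₁ ℓ := by
  rw [negAddY, negAddY, addX_scaling h]
  ring

theorem addY_scaling (x₁ x₂ y₁ ℓ : F) :
    W.toAffine.addY (u ^ 2 * x₁) (u ^ 2 * x₂) (u ^ 3 * y₁) (u * ℓ) =
      u ^ 3 * W'.toAffine.addY x₁ x₂ y₁ ℓ := by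
  rw [addY, addY, addX_scaling h, negAddY_scaling h, negY_scaling h]

variable [DecidableEq F]

noncomputable def Point.scaling : W'.toAffine.Point →+ W.toAffine.Point where
  toFun
    | 0 => 0
    | some x y hP => some (u ^ 2 * x) (u ^ 3 * y) ((nonsingular_scaling h x y).mpr hP)
  map_zero' := rfl
  map_add' := by
    rintro (_ | @⟨x₁, y₁, h₁⟩) (_ | @⟨x₂, y₂, h₂⟩)
    any_goals rfl
    have hu := u.ne_zero
    by_cases hxy : x₁ = x₂ ∧ y₁ = W'.toAffine.negY x₂ y₂
    · rw [Point.add_of_Y_eq hxy.1 hxy.2, Point.add_of_Y_eq (by rw [hxy.1])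
        (by rw [hxy.2, negY_scaling h])]
    · rw [Point.add_some hxy, Point.add_some fun hxy' => hxy ⟨?_, ?_⟩]
      · simp only [slope_scaling h, addX_scaling h, addY_scaling h]
      · exact mul_left_cancel₀ (pow_ne_zero 2 hu) hxy'.1
      · exact mul_left_cancel₀ (pow_ne_zero 3 hu) (hxy'.2.trans (negY_scaling h ..))

theorem Point.scaling_some {x y : F} (hP : W'.toAffine.Nonsingular x y) :
    Point.scaling h (some x y hP) =
      some (u ^ 2 * x) (u ^ 3 * y) ((nonsingular_scaling h x y).mpr hP) :=
  rfl

theorem Point.scaling_injective : Function.Injective (Point.scaling h) := by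
  rintro (_ | @⟨x₁, y₁, h₁⟩) (_ | @⟨x₂, y₂, h₂⟩) heq
  any_goals contradiction
  · rfl
  · simp only [Point.scaling_some, Point.some.injEq] at heq ⊢
    exact ⟨mul_left_cancel₀ (pow_ne_zero 2 u.ne_zero) heq.1,
      mul_left_cancel₀ (pow_ne_zero 3 u.ne_zero) heq.2⟩

end WeierstrassCurve.Affine

open WeierstrassCurve WeierstrassCurve.Affine

section QuadraticTwist

variable {K L : Type*} [Field K] [Field L] [Algebra K L] {W : WeierstrassCurve K}
  (hW₁ : W.a₁ = 0) (hW₃ : W.a₃ = 0) {d : K} {s : L} (hs0 : s ≠ 0)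
  (hs : s ^ 2 = algebraMap K L d)

include hW₁ hW₃ hs in
theorem baseChange_quadraticTwist :
    (quadraticTwist W.a₂ W.a₄ W.a₆ d).baseChange L =
      (⟨(Units.mk0 s hs0)⁻¹, 0, 0, 0⟩ : VariableChange L) • W.baseChange L := by
  ext <;> simp [quadraticTwist, variableChange_a₁, variableChange_a₂, variableChange_a₃,
    variableChange_a₄, variableChange_a₆, hW₁, hW₃, ← hs, ← pow_mul]

include hW₁ hW₃ hs0 hs in
theorem nonsingular_quadraticTwist_iff (x y : K) :
    (W.baseChange L).toAffine.Nonsingular (s⁻¹ ^ 2 * algebraMap K L x)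
        (s⁻¹ ^ 3 * algebraMap K L y) ↔
      (quadraticTwist W.a₂ W.a₄ W.a₆ d).toAffine.Nonsingular x y := by
  have h := nonsingular_scaling (baseChange_quadraticTwist hW₁ hW₃ hs0 hs)
    (algebraMap K L x) (algebraMap K L y)
  rw [Units.val_inv_eq_inv_val, Units.val_mk0] at h
  rw [h]
  exact baseChange_nonsingular (quadraticTwist W.a₂ W.a₄ W.a₆ d) (f := Algebra.ofId K L)
    (FaithfulSMul.algebraMap_injective K L) x y

variable (hdns : ¬∃ c : K, c ^ 2 = d) (hgen : Algebra.adjoin K {s} = ⊤) [DecidableEq L]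

theorem map_quadraticConj_map_quadraticConj (P : (W.baseChange L).toAffine.Point) :
    Point.map (quadraticConj hdns hs hgen) (Point.map (quadraticConj hdns hs hgen) P) = P := by
  rcases P with _ | ⟨x, y, hP⟩
  · rfl
  · simp [Point.map_some, quadraticConj_quadraticConj]

variable [DecidableEq K]

noncomputable def quadraticTwistToBaseChange :
    (quadraticTwist W.a₂ W.a₄ W.a₆ d).toAffine.Point →+ (W.baseChange L).toAffine.Point :=
  (Point.scaling (baseChange_quadraticTwist hW₁ hW₃ hs0 hs)).comp
    (Point.baseChange (W' := quadraticTwist W.a₂ W.a₄ W.a₆ d) K L)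

theorem quadraticTwistToBaseChange_injective :
    Function.Injective (quadraticTwistToBaseChange hW₁ hW₃ hs0 hs) :=
  (Point.scaling_injective (baseChange_quadraticTwist hW₁ hW₃ hs0 hs)).comp
    (Point.map_injective _)

theorem quadraticTwistToBaseChange_some {x y : K}
    (hQ : (quadraticTwist W.a₂ W.a₄ W.a₆ d).toAffine.Nonsingular x y) :
    quadraticTwistToBaseChange hW₁ hW₃ hs0 hs (.some x y hQ) =
      .some _ _ ((nonsingular_quadraticTwist_iff hW₁ hW₃ hs0 hs x y).mpr hQ) :=
  rfl

theorem map_quadraticConj_quadraticTwistToBaseChange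
    (Q : (quadraticTwist W.a₂ W.a₄ W.a₆ d).toAffine.Point) :
    Point.map (quadraticConj hdns hs hgen) (quadraticTwistToBaseChange hW₁ hW₃ hs0 hs Q) =
      -quadraticTwistToBaseChange hW₁ hW₃ hs0 hs Q := by
  rcases Q with _ | ⟨x, y, hQ⟩
  · rfl
  · rw [quadraticTwistToBaseChange_some, Point.map_some, Point.neg_some]
    simp [hW₁, hW₃, quadraticConj_self, Odd.neg_pow (by decide : Odd 3)]

variable [NeZero (2 : L)]

theorem exists_baseChange_eq_of_map_quadraticConj_eq {P : (W.baseChange L).toAffine.Point}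
    (hP : Point.map (quadraticConj hdns hs hgen) P = P) :
    ∃ P₀ : W.toAffine.Point, Point.baseChange (W' := W) K L P₀ = P := by
  rcases P with _ | ⟨x, y, h⟩
  · exact ⟨0, rfl⟩
  · rw [Point.map_some, Point.some.injEq] at hP
    obtain ⟨a, rfl⟩ := exists_algebraMap_eq_of_quadraticConj_eq hdns hs hgen hP.1
    obtain ⟨b, rfl⟩ := exists_algebraMap_eq_of_quadraticConj_eq hdns hs hgen hP.2
    exact ⟨.some a b ((baseChange_nonsingular W (f := Algebra.ofId K L)
      (FaithfulSMul.algebraMap_injective K L) a b).mp h), rfl⟩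

theorem exists_quadraticTwistToBaseChange_eq_of_map_quadraticConj_eq_neg
    {P : (W.baseChange L).toAffine.Point} (hP : Point.map (quadraticConj hdns hs hgen) P = -P) :
    ∃ Q, quadraticTwistToBaseChange hW₁ hW₃ hs0 hs Q = P := by
  rcases P with _ | ⟨x, y, h⟩
  · exact ⟨0, rfl⟩
  · rw [Point.map_some, Point.neg_some, Point.some.injEq] at hP
    obtain ⟨a, rfl⟩ := exists_algebraMap_eq_of_quadraticConj_eq hdns hs hgen hP.1
    obtain ⟨b, rfl⟩ := exists_algebraMap_mul_eq_of_quadraticConj_eq_neg hdns hs hgen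
      (by simpa [hW₁, hW₃] using hP.2)
    have hx : s⁻¹ ^ 2 * algebraMap K L (d * a) = algebraMap K L a := by
      rw [map_mul, ← hs]; field_simp
    have hy : s⁻¹ ^ 3 * algebraMap K L (d ^ 2 * b) = algebraMap K L b * s := by
      rw [map_mul, map_pow, ← hs]; field_simp
    refine ⟨.some _ _ ((nonsingular_quadraticTwist_iff hW₁ hW₃ hs0 hs _ _).mp (hx ▸ hy ▸ h)),
      ?_⟩
    rw [quadraticTwistToBaseChange_some, Point.some.injEq]
    exact ⟨hx, hy⟩

end QuadraticTwist

open Classical in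
theorem rank_quadratic_extension_general (K L : Type u) [Field K]
    [Field L] [NumberField L] [Algebra K L] (a₂ a₄ a₆ : K)
    (d : K) (hdns : ¬∃ c : K, c ^ 2 = d)
    (s : L) (hs : s ^ 2 = algebraMap K L d) (hgen : Algebra.adjoin K {s} = ⊤) :
    Module.rank ℤ ((⟨0, a₂, 0, a₄, a₆⟩ : WeierstrassCurve K).baseChange L).toAffine.Point =
      Module.rank ℤ (⟨0, a₂, 0, a₄, a₆⟩ : WeierstrassCurve K).toAffine.Point +
        Module.rank ℤ (quadraticTwist a₂ a₄ a₆ d).toAffine.Point := by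
  have hs0 : s ≠ 0 := ne_zero_of_sq_eq_nonsquare hdns hs
  let W : WeierstrassCurve K := ⟨0, a₂, 0, a₄, a₆⟩
  have hW₁ : W.a₁ = 0 := rfl
  have hW₃ : W.a₃ = 0 := rfl
  exact rank_eq_rank_add_rank_of_involution (Point.map (W' := W) (quadraticConj hdns hs hgen))
    (Point.baseChange (W' := W) K L) (quadraticTwistToBaseChange hW₁ hW₃ hs0 hs)
    (map_quadraticConj_map_quadraticConj hs hdns hgen) (Point.map_injective _)
    (quadraticTwistToBaseChange_injective hW₁ hW₃ hs0 hs) (Point.map_baseChange (W' := W) _)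
    (map_quadraticConj_quadraticTwistToBaseChange hW₁ hW₃ hs0 hs hdns hgen)
    (fun _ => exists_baseChange_eq_of_map_quadraticConj_eq hs hdns hgen)
    (fun _ => exists_quadraticTwistToBaseChange_eq_of_map_quadraticConj_eq_neg
      hW₁ hW₃ hs0 hs hdns hgen)

open Classical in
/-- Let `K` be a number field, `E : y² = x³ + a₂x² + a₄x + a₆` an elliptic curve over `K`,
`d ∈ K^×` a non-square, and `L = K(√d)`.  Then `rk E(L) = rk E(K) + rk E^d(K)`. -/
theorem rank_quadratic_extension (K L : Type u) [Field K] [NumberField K]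
    [Field L] [NumberField L] [Algebra K L] (a₂ a₄ a₆ : K)
    (hΔ : (⟨0, a₂, 0, a₄, a₆⟩ : WeierstrassCurve K).Δ ≠ 0)
    (d : K) (hd0 : d ≠ 0) (hdns : ¬∃ c : K, c ^ 2 = d)
    (s : L) (hs : s ^ 2 = algebraMap K L d) (hgen : Algebra.adjoin K {s} = ⊤) :
    Module.rank ℤ ((⟨0, a₂, 0, a₄, a₆⟩ : WeierstrassCurve K).baseChange L).toAffine.Point =
      Module.rank ℤ (⟨0, a₂, 0, a₄, a₆⟩ : WeierstrassCurve K).toAffine.Point +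
        Module.rank ℤ (quadraticTwist a₂ a₄ a₆ d).toAffine.Point :=
  rank_quadratic_extension_general K L a₂ a₄ a₆ d hdns s hs hgen
end

section
/- Let K be a number field with at least 25 real embeddings. Then there exist elements a₁, a₂, a₃ in the ring of integers O_K of K and 24 pairwise distinct real embeddings σ₁, …, σ₂₄ of K such that: (1) for every permutation f of {1, 2, 3} there are precisely four indices i ∈ {1, …, 24} with σ_i(a_{f(1)}) < σ_i(a_{f(2)}) < σ_i(a_{f(3)}); and (2) setting α = a₁ − a₂, β = a₁ − a₃, γ = a₂ − a₃, the classes of −1, α, β, γ in K^×/(K^×)² are linearly independent over 𝔽₂, i.e. for all e₀, e₁, e₂, e₃ ∈ {0, 1} not all zero, the element (−1)^{e₀} · α^{e₁} · β^{e₂} · γ^{e₃} is not a square in K. -/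
/-!
Weak approximation at the real places makes `K` dense in `ℝ^ι` for any family `ι` of distinct
real embeddings; scaling by a positive integer then yields algebraic integers `a₁, a₂, a₃` whose
images under 24 real embeddings realise each of the six orderings exactly four times. At each
embedding the signs of `α, β, γ` are fixed by the ordering, and for every nontrivial exponent
vector some ordering makes `(-1)^e₀ α^e₁ β^e₂ γ^e₃` negative, so it is not a square in `K`.
-/

open NumberField InfinitePlace InfiniteAdeleRing NumberField.mixedEmbedding Function Equiv

/-- Reading `g` as the list `g 0, g 1, …` of indices in increasing order, `j` sits at `g⁻¹ j`. -/
def Equiv.Perm.position {n : ℕ} (g : Perm (Fin n)) (j : Fin n) : ℤ := (g.symm j : ℕ)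

theorem Equiv.Perm.position_injective {n : ℕ} (g : Perm (Fin n)) : Injective g.position :=
  fun _ _ h => g.symm.injective (Fin.ext (Nat.cast_injective h))

theorem Equiv.Perm.position_lt_and_lt_iff :
    ∀ g f : Perm (Fin 3),
      g.position (f 0) < g.position (f 1) ∧ g.position (f 1) < g.position (f 2) ↔ f = g := by
  decide

section DiffMonomial

variable {R S : Type*}

def diffMonomial [Ring R] (e₀ e₁ e₂ e₃ : Bool) (x : Fin 3 → R) : R :=
  (if e₀ then -1 else 1) * (if e₁ then x 0 - x 1 else 1) * (if e₂ then x 0 - x 2 else 1) *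
    (if e₃ then x 1 - x 2 else 1)

theorem map_diffMonomial [Ring R] [Ring S] (f : R →+* S) (e₀ e₁ e₂ e₃ : Bool) (x : Fin 3 → R) :
    f (diffMonomial e₀ e₁ e₂ e₃ x) = diffMonomial e₀ e₁ e₂ e₃ (f ∘ x) := by
  simp only [diffMonomial, map_mul, apply_ite f, map_neg, map_one, map_sub, comp_apply]

theorem sign_sub_congr [Ring R] [LinearOrder R] [IsStrictOrderedRing R]
    [Ring S] [LinearOrder S] [IsStrictOrderedRing S] {a b : R} {c d : S}
    (hab : a < b ↔ c < d) (hba : b < a ↔ d < c) :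
    SignType.sign (a - b) = SignType.sign (c - d) := by
  rcases lt_trichotomy c d with h | h | h
  · rw [sign_neg (sub_neg.2 (hab.2 h)), sign_neg (sub_neg.2 h)]
  · have : a = b :=
      le_antisymm (not_lt.1 fun h' => (hba.1 h').ne' h) (not_lt.1 fun h' => (hab.1 h').ne h)
    rw [this, h, sub_self, sub_self, sign_zero, sign_zero]
  · rw [sign_pos (sub_pos.2 (hba.2 h)), sign_pos (sub_pos.2 h)]

theorem sign_diffMonomial_congr [Ring R] [LinearOrder R] [IsStrictOrderedRing R]
    [Ring S] [LinearOrder S] [IsStrictOrderedRing S] (e₀ e₁ e₂ e₃ : Bool) {x : Fin 3 → R}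
    {y : Fin 3 → S} (h : ∀ j k, x j < x k ↔ y j < y k) :
    SignType.sign (diffMonomial e₀ e₁ e₂ e₃ x) = SignType.sign (diffMonomial e₀ e₁ e₂ e₃ y) := by
  have hsub : ∀ j k, SignType.sign (x j - x k) = SignType.sign (y j - y k) :=
    fun j k => sign_sub_congr (h j k) (h k j)
  simp only [diffMonomial, sign_mul, apply_ite SignType.sign, Left.sign_neg, sign_one, hsub]

theorem exists_perm_diffMonomial_neg :
    ∀ e₀ e₁ e₂ e₃ : Bool, (e₀ || e₁ || e₂ || e₃) = true →
      ∃ f : Perm (Fin 3), diffMonomial e₀ e₁ e₂ e₃ f.position < 0 := by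
  decide

end DiffMonomial

theorem lt_iff_lt_of_dist_lt_half {ι : Type*} {x : ι → ℝ} {y : ι → ℤ} (hy : Injective y)
    (h : ∀ j, dist (x j) (y j) < 1 / 2) (j k : ι) : x j < x k ↔ y j < y k := by
  have hj := abs_lt.1 (h j)
  have hk := abs_lt.1 (h k)
  rcases eq_or_ne j k with rfl | hjk
  · simp
  rcases (hy.ne hjk).lt_or_gt with hlt | hlt
  · have : (y j : ℝ) + 1 ≤ y k := by exact_mod_cast hlt
    simp only [hlt, iff_true]
    linarith
  · have : (y k : ℝ) + 1 ≤ y j := by exact_mod_cast hlt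
    simp only [hlt.not_gt, iff_false, not_lt]
    linarith

namespace NumberField

variable {K : Type*} [Field K]

theorem ComplexEmbedding.isReal_of_forall_im_eq_zero {φ : K →+* ℂ} (h : ∀ x, (φ x).im = 0) :
    ComplexEmbedding.IsReal φ :=
  ComplexEmbedding.isReal_iff.2 (RingHom.ext fun x => Complex.conj_eq_iff_im.2 (h x))

variable [NumberField K]

variable (K) in
theorem denseRange_mixedEmbedding_fst : DenseRange fun x : K => (mixedEmbedding K x).1 := by
  have hcont : Continuous fun y : InfiniteAdeleRing K => (ringEquiv_mixedSpace K y).1 := by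
    simp only [ringEquiv_mixedSpace_apply]
    exact continuous_pi fun w =>
      (Completion.isometry_extensionEmbeddingOfIsReal w.2).continuous.comp (continuous_apply w.1)
  have hsurj : Surjective fun y : InfiniteAdeleRing K => (ringEquiv_mixedSpace K y).1 :=
    Prod.fst_surjective.comp (ringEquiv_mixedSpace K).surjective
  convert hsurj.denseRange.comp (denseRange_algebraMap K) hcont using 2 with x
  rw [mixedEmbedding_eq_algebraMap_comp]
  rfl

theorem denseRange_pi_isReal_embedding {ι : Type*} {φ : ι → K →+* ℂ} (hφ : Injective φ)
    (hreal : ∀ i, ComplexEmbedding.IsReal (φ i)) :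
    DenseRange fun (x : K) (i : ι) => (hreal i).embedding x := by
  let w : ι → {w : InfinitePlace K // IsReal w} := fun i => mkReal ⟨φ i, hreal i⟩
  have hw : Injective w := mkReal.injective.comp fun i j h => hφ (congrArg Subtype.val h)
  have hcomp : ∀ x i, (mixedEmbedding K x).1 (w i) = (hreal i).embedding x := fun x i => by
    apply Complex.ofReal_injective
    rw [mixedEmbedding_apply_isReal, embedding_of_isReal_apply, mkReal_coe,
      embedding_mk_eq_of_isReal (hreal i), ComplexEmbedding.IsReal.coe_embedding_apply]
  have := (hw.surjective_comp_right (γ := ℝ)).denseRange.comp (denseRange_mixedEmbedding_fst K)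
    (continuous_pi fun i => continuous_apply (w i))
  convert this using 2 with x
  funext i
  exact (hcomp x i).symm

theorem exists_pos_nsmul_isIntegral {ι : Type*} [Finite ι] (b : ι → K) :
    ∃ N : ℕ, 0 < N ∧ ∀ j, IsIntegral ℤ (N • b j) := by
  have hd : ∀ j, Algebra.natDenominator (b j) ≠ 0 := fun j =>
    (IsFractionRing.isAlgebraic_iff ℤ ℚ K |>.2 (.of_finite ℚ (b j))).natDenominator_ne_zero
  have := Fintype.ofFinite ι
  exact ⟨∏ j, Algebra.natDenominator (b j),
    Nat.pos_of_ne_zero (Finset.prod_ne_zero_iff.2 fun j _ => hd j),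
    fun j => Algebra.natDenominator_dvd_iff.1 (Finset.dvd_prod_of_mem _ (Finset.mem_univ j))⟩

theorem exists_ringOfIntegers_lt_iff_lt {ι m : Type*} [Finite ι] [Finite m]
    {φ : ι → K →+* ℂ} (hφ : Injective φ) (hreal : ∀ i, ComplexEmbedding.IsReal (φ i))
    (y : ι → m → ℤ) (hy : ∀ i, Injective (y i)) :
    ∃ a : m → 𝓞 K, ∀ i j k,
      (hreal i).embedding (a j) < (hreal i).embedding (a k) ↔ y i j < y i k := by
  have := Fintype.ofFinite ι
  have happrox : ∀ j, ∃ b : K, ∀ i, dist ((hreal i).embedding b) (y i j) < 1 / 2 := fun j => by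
    obtain ⟨b, hb⟩ := (denseRange_pi_isReal_embedding hφ hreal).exists_dist_lt
      (fun i => (y i j : ℝ)) one_half_pos
    exact ⟨b, fun i => dist_comm (y i j : ℝ) _ ▸ (dist_pi_lt_iff one_half_pos).1 hb i⟩
  choose b hb using happrox
  obtain ⟨N, hN, hint⟩ := exists_pos_nsmul_isIntegral b
  refine ⟨fun j => ⟨N • b j, hint j⟩, fun i j k => ?_⟩
  change (hreal i).embedding (N • b j) < (hreal i).embedding (N • b k) ↔ _
  rw [map_nsmul, map_nsmul, nsmul_eq_mul, nsmul_eq_mul, mul_lt_mul_iff_right₀ (Nat.cast_pos.2 hN)]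
  exact lt_iff_lt_of_dist_lt_half (hy i) (fun j => hb j i) j k

end NumberField

/-- Let `K` be a number field with at least 25 real embeddings.  Then there exist
`a₁, a₂, a₃ ∈ O_K` and 24 distinct real embeddings `σ₁, …, σ₂₄` of `K` such that for every
permutation `f` of `{1, 2, 3}` there are precisely four indices `i` with
`σᵢ(a_{f 1}) < σᵢ(a_{f 2}) < σᵢ(a_{f 3})`, and such that the classes of `-1`, `α = a₁ - a₂`,
`β = a₁ - a₃`, `γ = a₂ - a₃` in `K^×/(K^×)²` are linearly independent over `𝔽₂`. -/
theorem exists_starting_curve (K : Type*) [Field K] [NumberField K]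
    (hreal : 25 ≤ Nat.card {σ : K →+* ℂ // ∀ x, (σ x).im = 0}) :
    ∃ (a : Fin 3 → 𝓞 K) (σ : Fin 24 → {σ : K →+* ℂ // ∀ x, (σ x).im = 0}),
      Function.Injective σ ∧
      (∀ f : Equiv.Perm (Fin 3),
        Nat.card {i : Fin 24 //
          ((σ i).1 ((a (f 0) : K))).re < ((σ i).1 ((a (f 1) : K))).re ∧
          ((σ i).1 ((a (f 1) : K))).re < ((σ i).1 ((a (f 2) : K))).re} = 4) ∧
      (∀ e₀ e₁ e₂ e₃ : Bool, (e₀ || e₁ || e₂ || e₃) = true →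
        ¬∃ x : K, x ^ 2 =
          (if e₀ then -1 else 1) * (if e₁ then ((a 0 : K) - (a 1 : K)) else 1) *
          (if e₂ then ((a 0 : K) - (a 2 : K)) else 1) *
          (if e₃ then ((a 1 : K) - (a 2 : K)) else 1)) := by
  obtain ⟨σ⟩ : Nonempty (Fin 24 ↪ {σ : K →+* ℂ // ∀ x, (σ x).im = 0}) := by
    have := Fintype.ofFinite {σ : K →+* ℂ // ∀ x, (σ x).im = 0}
    refine Function.Embedding.nonempty_of_card_le ?_
    rw [Fintype.card_fin, ← Nat.card_eq_fintype_card]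
    omega
  have hσ i : ComplexEmbedding.IsReal (σ i).1 :=
    ComplexEmbedding.isReal_of_forall_im_eq_zero (σ i).2
  let e : Fin 24 ≃ Perm (Fin 3) × Fin 4 :=
    (Fintype.equivFinOfCardEq (by simp [Fintype.card_perm, Nat.factorial])).symm
  obtain ⟨a, ha⟩ := exists_ringOfIntegers_lt_iff_lt (Subtype.val_injective.comp σ.injective) hσ
    (fun i => (e i).1.position) fun i => (e i).1.position_injective
  -- `(hσ i).embedding x` is `((σ i).1 x).re` by definition, so `ha` compares the real parts.
  refine ⟨a, σ, σ.injective, fun f => ?_, fun e₀ e₁ e₂ e₃ he => ?_⟩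
  · calc _ = Nat.card {i // (e i).1 = f} := Nat.card_congr <| Equiv.subtypeEquivRight fun i =>
          ((ha i _ _).and (ha i _ _)).trans ((Perm.position_lt_and_lt_iff _ _).trans eq_comm)
      _ = Nat.card {p : Perm (Fin 3) × Fin 4 // p.1 = f} :=
          Nat.card_congr (e.subtypeEquiv fun _ => Iff.rfl)
      _ = 4 := by
          rw [Nat.card_congr (prodSubtypeFstEquivSubtypeProd (p := (· = f))), Nat.card_prod]
          simp
  · rintro ⟨x, hx⟩
    obtain ⟨f, hf⟩ := exists_perm_diffMonomial_neg e₀ e₁ e₂ e₃ he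
    let i := e.symm (f, 0)
    have hneg : (hσ i).embedding (diffMonomial e₀ e₁ e₂ e₃ fun j => (a j : K)) < 0 := by
      rw [← sign_eq_neg_one_iff, map_diffMonomial, sign_diffMonomial_congr _ _ _ _
        (x := (hσ i).embedding ∘ fun j => (a j : K)) (ha i)]
      simpa [i] using sign_eq_neg_one_iff.2 hf
    exact (sq_nonneg ((hσ i).embedding x)).not_gt (by rwa [← map_pow, hx])
end

section
/- Let ℓ ≥ k ≥ 1 be integers, let A : ℝ^ℓ → ℝ^k be a surjective linear map, and let c₁, …, c_k ∈ ℝ. Then there exists a positive real number C such that the Lebesgue measure of A⁻¹(∏_{i=1}^{k} (cᵢ, ∞)) ∩ [−H, H]^ℓ is asymptotic to C·H^ℓ as H → ∞; that is, μ(A⁻¹(∏_{i=1}^{k} (cᵢ, ∞)) ∩ [−H, H]^ℓ) / H^ℓ tends to C as H → ∞. -/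
open MeasureTheory Filter Topology ENNReal Pointwise

/-!
Scaling by `H` maps `A⁻¹{y > c/H} ∩ [-1, 1]^ℓ` onto `A⁻¹{y > c} ∩ [-H, H]^ℓ` and multiplies
volumes by `H^ℓ`. As `H → ∞` the sets `A⁻¹{y > c/H}` converge to the cone `A⁻¹{y > 0}` at every
point off the hyperplanes `(A x)ᵢ = 0`, which are null because `A` is surjective; dominated
convergence on the unit cube then gives the limit `C = μ(A⁻¹{y > 0} ∩ [-1, 1]^ℓ)`. This is positive
because the open cone `A⁻¹{y > 0}` is nonempty, so it meets the interior of the cube.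
-/

section Orthant

variable {ι : Type*}

lemma isOpen_setOf_forall_lt [Finite ι] (c : ι → ℝ) : IsOpen {y : ι → ℝ | ∀ i, c i < y i} := by
  rw [Set.ofPred_forall]
  exact isOpen_iInter_of_finite fun i => isOpen_lt continuous_const (continuous_apply i)

lemma eventually_forall_div_lt_iff_forall_pos [Finite ι] (c y : ι → ℝ) (hy : ∀ i, y i ≠ 0) :
    ∀ᶠ H : ℝ in atTop, (∀ i, c i / H < y i) ↔ ∀ i, 0 < y i := by
  have h : ∀ i, ∀ᶠ H : ℝ in atTop, (c i / H < y i ↔ 0 < y i) := by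
    intro i
    have hlim : Tendsto (fun H : ℝ => c i / H) atTop (𝓝 0) :=
      tendsto_const_nhds.div_atTop tendsto_id
    rcases (hy i).lt_or_gt with hneg | hpos
    · filter_upwards [hlim.eventually_const_lt hneg] with H hH
      exact iff_of_false hH.not_gt hneg.not_gt
    · filter_upwards [hlim.eventually_lt_const hpos] with H hH
      exact iff_of_true hH hpos
  filter_upwards [eventually_all.2 h] with H hH
  exact forall_congr' hH

end Orthant

section Haar

variable {ι E : Type*} [NormedAddCommGroup E] [NormedSpace ℝ E] [MeasurableSpace E]
  [BorelSpace E] [FiniteDimensional ℝ E] (μ : Measure E) [μ.IsAddHaarMeasure]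
  {A : E →ₗ[ℝ] ι → ℝ}

lemma LinearMap.ae_forall_apply_ne_zero [Countable ι] (hA : Function.Surjective A) :
    ∀ᵐ x ∂μ, ∀ i, A x i ≠ 0 := by
  refine ae_all_iff.2 fun i => ?_
  have hker : LinearMap.ker ((LinearMap.proj i).comp A) ≠ ⊤ := by
    intro htop
    obtain ⟨x, hx⟩ := hA 1
    simpa [hx] using LinearMap.congr_fun (LinearMap.ker_eq_top.1 htop) x
  exact measure_mono_null (fun x hx => by simpa using hx)
    (Measure.addHaar_submodule μ _ hker)

lemma tendsto_measure_preimage_setOf_div_lt_inter [Finite ι] (hA : Function.Surjective A)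
    (c : ι → ℝ) {B : Set E} (hB : MeasurableSet B) (hμB : μ B ≠ ∞) :
    Tendsto (fun H : ℝ => μ (A ⁻¹' {y | ∀ i, c i / H < y i} ∩ B)) atTop
      (𝓝 (μ (A ⁻¹' {y | ∀ i, 0 < y i} ∩ B))) := by
  have hmeas : ∀ d : ι → ℝ, MeasurableSet (A ⁻¹' {y | ∀ i, d i < y i} ∩ B) := fun d =>
    ((isOpen_setOf_forall_lt d).preimage A.continuous_of_finiteDimensional).measurableSet.inter hB
  refine tendsto_measure_of_ae_tendsto_indicator atTop (hmeas 0) (fun H => hmeas fun i => c i / H)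
    hB hμB (Eventually.of_forall fun _ => Set.inter_subset_right) ?_
  filter_upwards [A.ae_forall_apply_ne_zero μ hA] with x hx
  filter_upwards [eventually_forall_div_lt_iff_forall_pos c (A x) hx] with H hH
  exact and_congr_left fun _ => hH

end Haar

section Cube

variable {ι κ : Type*}

lemma preimage_setOf_lt_inter_Icc_eq_smul (A : (κ → ℝ) →ₗ[ℝ] ι → ℝ) (c : ι → ℝ) {H : ℝ}
    (hH : 0 < H) :
    A ⁻¹' {y | ∀ i, c i < y i} ∩ Set.Icc (fun _ => -H) (fun _ => H) =
      H • (A ⁻¹' {y | ∀ i, c i / H < y i} ∩ Set.Icc (fun _ => -1) (fun _ => 1)) := by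
  ext x
  simp only [Set.mem_smul_set_iff_inv_smul_mem₀ hH.ne', Set.mem_inter_iff, Set.mem_preimage,
    Set.mem_ofPred_eq, map_smul, Set.mem_Icc, Pi.le_def, Pi.smul_apply, smul_eq_mul,
    div_eq_inv_mul, mul_lt_mul_iff_right₀ (inv_pos.2 hH), le_inv_mul_iff₀ hH,
    inv_mul_le_iff₀ hH, mul_neg_one, mul_one]

lemma measure_preimage_setOf_lt_inter_Icc [Fintype κ] (μ : Measure (κ → ℝ))
    [μ.IsAddHaarMeasure] (A : (κ → ℝ) →ₗ[ℝ] ι → ℝ) (c : ι → ℝ) {H : ℝ} (hH : 0 < H) :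
    μ (A ⁻¹' {y | ∀ i, c i < y i} ∩ Set.Icc (fun _ => -H) (fun _ => H)) =
      ENNReal.ofReal (H ^ Fintype.card κ) *
        μ (A ⁻¹' {y | ∀ i, c i / H < y i} ∩ Set.Icc (fun _ => -1) (fun _ => 1)) := by
  rw [preimage_setOf_lt_inter_Icc_eq_smul A c hH, Measure.addHaar_smul_of_nonneg μ hH.le,
    Module.finrank_fintype_fun_eq_card]

lemma measure_preimage_setOf_pos_inter_Icc_pos [Finite ι] [Finite κ] (μ : Measure (κ → ℝ))
    [μ.IsOpenPosMeasure] {A : (κ → ℝ) →ₗ[ℝ] ι → ℝ} (hA : Function.Surjective A) :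
    0 < μ (A ⁻¹' {y | ∀ i, 0 < y i} ∩ Set.Icc (fun _ => -1) (fun _ => 1)) := by
  obtain ⟨x, hx⟩ := hA 1
  have hcube : Set.Icc (fun _ => -1) (fun _ => 1) ∈ 𝓝 (0 : κ → ℝ) :=
    pi_Icc_mem_nhds (fun _ => neg_one_lt_zero) (fun _ => zero_lt_one)
  have hsmall : ∀ᶠ t : ℝ in 𝓝 0, t • x ∈ interior (Set.Icc (fun _ => -1) (fun _ => 1)) := by
    refine (continuous_id.smul continuous_const).continuousAt.preimage_mem_nhds ?_
    simpa using isOpen_interior.mem_nhds (mem_interior_iff_mem_nhds.2 hcube)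
  obtain ⟨t, ht, htpos⟩ := ((hsmall.filter_mono nhdsWithin_le_nhds).and
    (self_mem_nhdsWithin (s := Set.Ioi 0))).exists
  refine μ.measure_pos_of_mem_nhds (x := t • x)
    (Filter.inter_mem ?_ (mem_interior_iff_mem_nhds.1 ht))
  refine ((isOpen_setOf_forall_lt 0).preimage A.continuous_of_finiteDimensional).mem_nhds ?_
  simpa [hx] using fun _ : ι => htpos

end Cube

theorem volume_preimage_halfspaces_asymptotic_general (ℓ k : ℕ)
    (A : (Fin ℓ → ℝ) →ₗ[ℝ] (Fin k → ℝ)) (hA : Function.Surjective A) (c : Fin k → ℝ) :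
    ∃ C : ℝ, 0 < C ∧
      Tendsto (fun H : ℝ =>
          (volume (A ⁻¹' {y | ∀ i, c i < y i} ∩
            Set.Icc (fun _ => -H) (fun _ => H))).toReal / H ^ ℓ)
        atTop (nhds C) := by
  have hcube : volume (Set.Icc (fun _ => -1) (fun _ => 1) : Set (Fin ℓ → ℝ)) ≠ ∞ :=
    isCompact_Icc.measure_lt_top.ne
  set T := A ⁻¹' {y | ∀ i, 0 < y i} ∩ Set.Icc (fun _ => -1) (fun _ => 1)
  have hT : volume T ≠ ∞ := ne_top_of_le_ne_top hcube (measure_mono Set.inter_subset_right)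
  refine ⟨(volume T).toReal,
    ENNReal.toReal_pos (measure_preimage_setOf_pos_inter_Icc_pos volume hA).ne' hT, ?_⟩
  refine ((ENNReal.tendsto_toReal hT).comp
    (tendsto_measure_preimage_setOf_div_lt_inter volume hA c measurableSet_Icc hcube)).congr' ?_
  filter_upwards [eventually_gt_atTop 0] with H hH
  rw [Function.comp_apply, measure_preimage_setOf_lt_inter_Icc volume A c hH, ENNReal.toReal_mul,
    ENNReal.toReal_ofReal (by positivity), Fintype.card_fin,
    mul_div_cancel_left₀ _ (pow_pos hH ℓ).ne']

/-- Let `ℓ ≥ k ≥ 1`, let `A : ℝ^ℓ → ℝ^k` be a surjective linear map and `c₁, …, c_k ∈ ℝ`.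
Then there is a positive constant `C` such that the Lebesgue measure of
`A⁻¹(∏ᵢ (cᵢ, ∞)) ∩ [-H, H]^ℓ` is asymptotic to `C·H^ℓ` as `H → ∞`. -/
theorem volume_preimage_halfspaces_asymptotic (ℓ k : ℕ) (hk : 1 ≤ k) (hkℓ : k ≤ ℓ)
    (A : (Fin ℓ → ℝ) →ₗ[ℝ] (Fin k → ℝ)) (hA : Function.Surjective A) (c : Fin k → ℝ) :
    ∃ C : ℝ, 0 < C ∧
      Tendsto (fun H : ℝ =>
          (volume (A ⁻¹' {y | ∀ i, c i < y i} ∩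
            Set.Icc (fun _ => -H) (fun _ => H))).toReal / H ^ ℓ)
        atTop (nhds C) :=
  volume_preimage_halfspaces_asymptotic_general ℓ k A hA c
end

section
/- Let K be a number field and let L₁, L₂, L₃, L₄ : K² → K be K-linear forms that are pairwise linearly independent over K (for all i ≠ j, the pair (L_i, L_j) is K-linearly independent). For each real embedding τ : K → ℝ of K, fix a 2-element subset I_τ ⊆ {1, 2, 3, 4}. Then the family of ℚ-linear maps {τ ∘ L_i : K² → ℝ, for τ a real embedding of K and i ∈ I_τ} is linearly independent over ℝ, viewed inside the ℝ-vector space of ℚ-linear maps from K² to ℝ. -/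
/-!
Writing a vanishing `ℝ`-combination `∑ g(τ,i) τ(Lᵢ v)` at `x • v` gives
`∑_τ (∑_{i ∈ I_τ} g(τ,i) τ(Lᵢ v)) τ(x) = 0`, so Dedekind's independence of characters separates
the embeddings: for each `τ`, `∑_{i ∈ I_τ} g(τ,i) τ ∘ Lᵢ = 0`. Two independent forms on `K²` are
jointly surjective onto `K²`, so some `v` has `Lᵢ v = 1` and `Lⱼ v = 0`, forcing `g(τ,i) = 0`.
-/

section

variable {K V : Type*} [Field K] [AddCommGroup V] [Module K V]

theorem LinearMap.pi_surjective_of_linearIndependent {ι : Type*} [Finite ι]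
    {f : ι → V →ₗ[K] K} (hf : LinearIndependent K f) : Function.Surjective (LinearMap.pi f) := by
  have hfun : LinearIndependent K fun i => (f i : V → K) :=
    hf.map' (LinearMap.ltoFun K V K K) (LinearMap.ker_eq_bot.mpr DFunLike.coe_injective)
  rw [← LinearMap.range_eq_top, eq_top_iff, ← span_flip_eq_top_iff_linearIndependent.mpr hfun,
    Submodule.span_le]
  rintro _ ⟨v, rfl⟩
  exact ⟨v, rfl⟩

theorem LinearIndependent.ringHom_comp {L : Type*} [Ring L] {ι : Type*} [Fintype ι]
    {f : ι → V →ₗ[K] K} (hf : LinearIndependent K f) (τ : K →+* L) :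
    LinearIndependent L fun i v => τ (f i v) := by
  classical
  rw [Fintype.linearIndependent_iff]
  intro c hc k
  obtain ⟨v, hv⟩ := LinearMap.pi_surjective_of_linearIndependent hf (Pi.single k 1)
  have hfv : ∀ i, f i v = (Pi.single k 1 : ι → K) i := fun i => congrFun hv i
  simpa [hfv, Pi.single_apply, apply_ite τ] using congrFun hc v

theorem linearIndependent_sigma_ringHom_comp {L : Type*} [CommRing L] [IsDomain L]
    [Fintype (K →+* L)] {ι : (K →+* L) → Type*} [∀ τ, Fintype (ι τ)]
    {f : ∀ τ, ι τ → V →ₗ[K] K} (hf : ∀ τ : K →+* L, LinearIndependent L fun i v => τ (f τ i v)) :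
    LinearIndependent L fun p : Σ τ, ι τ => fun v => p.1 (f p.1 p.2 v) := by
  rw [Fintype.linearIndependent_iff]
  intro g hg
  have hchar : LinearIndependent L fun τ : K →+* L => (τ : K → L) :=
    (linearIndependent_monoidHom K L).comp RingHom.toMonoidHom
      fun _ _ e => RingHom.ext (DFunLike.congr_fun e :)
  have hsplit : ∀ τ v, ∑ i, g ⟨τ, i⟩ * τ (f τ i v) = 0 := by
    intro τ v
    refine Fintype.linearIndependent_iff.mp hchar (fun σ => ∑ i, g ⟨σ, i⟩ * σ (f σ i v)) ?_ τ
    funext x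
    have hx := congrFun hg (x • v)
    simp only [Finset.sum_apply, Pi.smul_apply, smul_eq_mul, Pi.zero_apply, map_smul, map_mul,
      Finset.sum_mul] at hx ⊢
    rw [← hx, ← Finset.univ_sigma_univ, Finset.sum_sigma]
    exact Finset.sum_congr rfl fun σ _ => Finset.sum_congr rfl fun i _ => by ring
  rintro ⟨τ, i⟩
  exact Fintype.linearIndependent_iff.mp (hf τ) (fun i => g ⟨τ, i⟩)
    (funext fun v => by simpa using hsplit τ v) i

end

/-- Let `K` be a number field and `L₁, L₂, L₃, L₄ : K² → K` pairwise linearly independent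
`K`-linear forms.  For each real embedding `τ : K → ℝ` fix a two-element subset
`I_τ ⊆ {1, 2, 3, 4}`.  Then the family of `ℚ`-linear maps `τ ∘ Lᵢ : K² → ℝ`, for `τ` a real
embedding and `i ∈ I_τ`, is `ℝ`-linearly independent in the space of `ℚ`-linear maps
`K² → ℝ`. -/
theorem linearIndependent_real_embeddings_comp (K : Type*) [Field K] [NumberField K]
    (L : Fin 4 → (K × K) →ₗ[K] K)
    (hL : ∀ i j, i ≠ j → LinearIndependent K ![L i, L j])
    (I : (K →+* ℝ) → Finset (Fin 4)) (hI : ∀ τ, (I τ).card = 2) :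
    LinearIndependent ℝ
      (fun p : Σ τ : K →+* ℝ, {i : Fin 4 // i ∈ I τ} =>
        (((p.1.toAddMonoidHom.comp (L p.2.1).toAddMonoidHom).toRatLinearMap) :
          (K × K) →ₗ[ℚ] ℝ)) := by
  refine LinearIndependent.of_comp (LinearMap.ltoFun ℚ (K × K) ℝ ℝ) ?_
  refine linearIndependent_sigma_ringHom_comp (f := fun τ (i : {i // i ∈ I τ}) => L i) fun τ => ?_
  obtain ⟨i, j, hij, hIτ⟩ := Finset.card_eq_two.mp (hI τ)
  have hpair : LinearIndepOn K L (I τ : Set (Fin 4)) := by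
    rw [hIτ, Finset.coe_pair, LinearIndepOn.pair_iff L hij]
    exact LinearIndependent.pair_iff.mp (hL i j hij)
  exact hpair.ringHom_comp τ
end
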